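/- arXiv:1808.00445 — 4 statements merged into one kernel-verified Lean document; each statement's English description precedes it below -/
import Mathlib

section
/- For any perfect matching M on {1,...,2n}, the product of minors Δ_M lies in the ℂ-span of the products Δ_N where N ranges over noncrossing perfect matchings of {1,...,2n}; moreover Δ_M is a nonnegative integer combination of such Δ_N. -/
open MvPolynomial Finset

noncomputable section

/-- The polynomial ring ℂ[x_{ij}] for a 2 × (2n) matrix of indeterminates. -/
abbrev PolyR (n : ℕ) := MvPolynomial (Fin 2 × Fin (2 * n)) ℂ

/-- The 2×2 minor Δ_{ab} = x_{1a} x_{2b} - x_{1b} x_{2a} (rows 0,1 in 0-indexing). -/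
def Delta {n : ℕ} (a b : Fin (2 * n)) : PolyR n :=
  X (0, a) * X (1, b) - X (0, b) * X (1, a)

/-- A perfect matching on {1,…,2n}, encoded as a fixed-point-free involution. -/
structure PM (n : ℕ) where
  f : Fin (2 * n) → Fin (2 * n)
  invol : ∀ i, f (f i) = i
  nofix : ∀ i, f i ≠ i

/-- The product Δ_M of the minors over the blocks of a perfect matching M. -/
def DeltaM {n : ℕ} (M : PM n) : PolyR n :=
  ∏ i ∈ Finset.univ.filter (fun i => i < M.f i), Delta i (M.f i)

/-- M is noncrossing: no a < b < c < d with a ∼ c and b ∼ d. -/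
def Noncrossing {n : ℕ} (M : PM n) : Prop :=
  ¬ ∃ a b c d : Fin (2 * n), a < b ∧ b < c ∧ c < d ∧ M.f a = c ∧ M.f b = d

/-- The number of crossing pairs a < b < c < d with a ∼ c, b ∼ d in M. -/
def crossings {n : ℕ} (M : PM n) : ℕ :=
  ((Finset.univ : Finset (Fin (2 * n) × Fin (2 * n))).filter
    (fun p => p.1 < p.2 ∧ p.2 < M.f p.1 ∧ M.f p.1 < M.f p.2)).card

/-!
A crossing `a < b < c < d` with `a ∼ c`, `b ∼ d` is resolved by the Plücker relation
`Δ_ac Δ_bd = Δ_ab Δ_cd + Δ_ad Δ_bc`, which writes `Δ_M` as `Δ_N₁ + Δ_N₂` for the two recouplings of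
the four endpoints (`M` conjugated by the transpositions `(b c)` and `(c d)`). Both strictly decrease
the potential `∑ (j - i) (2n - (j - i))` over the blocks `i < j`: the drops are
`2 (c - b) (2n - (d - a))` and `2 (b - a) (d - c)`. Well-founded induction on the potential
therefore ends at noncrossing matchings.
-/

theorem Delta_mul_Delta {n : ℕ} (a b c d : Fin (2 * n)) :
    Delta a c * Delta b d = Delta a b * Delta c d + Delta a d * Delta b c := by
  simp only [Delta]; ring

def chordWeight (n i j : ℕ) : ℕ := (j - i) * (2 * n - (j - i))

theorem cast_chordWeight {n i j : ℕ} (hij : i ≤ j) (hj : j ≤ 2 * n) :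
    (chordWeight n i j : ℤ) = (j - i) * (2 * n - (j - i)) := by
  push_cast [chordWeight, hij, show j - i ≤ 2 * n by omega]
  rfl

theorem chordWeight_add_lt_of_crossing {n a b c d : ℕ} (hab : a < b) (hbc : b < c) (hcd : c < d)
    (hd : d < 2 * n) :
    chordWeight n a b + chordWeight n c d < chordWeight n a c + chordWeight n b d ∧
      chordWeight n a d + chordWeight n b c < chordWeight n a c + chordWeight n b d := by
  zify
  simp (disch := omega) only [cast_chordWeight]
  constructor <;> nlinarith

namespace PM

variable {n : ℕ}

def conj (M : PM n) (σ : Equiv.Perm (Fin (2 * n))) : PM n where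
  f := σ ∘ M.f ∘ σ.symm
  invol i := by simp [M.invol]
  nofix i h := M.nofix (σ.symm i) (by simpa [Equiv.eq_symm_apply] using h)

theorem conj_swap_apply_of_ne (M : PM n) {x y i : Fin (2 * n)} (hx : i ≠ x) (hy : i ≠ y)
    (hfx : i ≠ M.f x) (hfy : i ≠ M.f y) : (M.conj (Equiv.swap x y)).f i = M.f i := by
  have hx' : M.f i ≠ x := fun h => hfx (by rw [← h, M.invol])
  have hy' : M.f i ≠ y := fun h => hfy (by rw [← h, M.invol])
  simp [conj, Equiv.swap_apply_of_ne_of_ne, hx, hy, hx', hy']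

@[to_additive]
def blockProd {β : Type*} [CommMonoid β] (M : PM n) (g : Fin (2 * n) → Fin (2 * n) → β) : β :=
  ∏ i ∈ Finset.univ.filter (fun i => i < M.f i), g i (M.f i)

theorem deltaM_eq_blockProd (M : PM n) : DeltaM M = M.blockProd Delta := rfl

@[to_additive]
theorem blockProd_eq_mul_prod_compl {β : Type*} [CommMonoid β] (M : PM n)
    (g : Fin (2 * n) → Fin (2 * n) → β) {p q r s : Fin (2 * n)} (hpq : p < q) (hrs : r < s)
    (hpr : p ≠ r) (hp : M.f p = q) (hr : M.f r = s) :
    M.blockProd g = g p q * g r s *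
      ∏ i ∈ ({p, q, r, s} : Finset _)ᶜ, if i < M.f i then g i (M.f i) else 1 := by
  have hq : M.f q = p := by rw [← hp, M.invol]
  have hs : M.f s = r := by rw [← hr, M.invol]
  have hpq' : p ≠ q := hpq.ne
  have hrs' : r ≠ s := hrs.ne
  have hps : p ≠ s := by
    rintro rfl; obtain rfl : q = r := hp.symm.trans hs; exact lt_asymm hpq hrs
  have hqr : q ≠ r := by
    rintro rfl; obtain rfl : p = s := hq.symm.trans hr; exact lt_asymm hpq hrs
  have hqs : q ≠ s := fun h => hpr (by rw [← hq, h, hs])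
  rw [blockProd, Finset.prod_filter, ← Finset.prod_mul_prod_compl {p, q, r, s}]
  congr 1
  simp [Finset.prod_insert, hpq', hpr, hps, hqr, hqs, hrs', hp, hq, hr, hs, hpq, hrs,
    hpq.not_gt, hrs.not_gt, mul_comm]

def potential (M : PM n) : ℕ := M.blockSum fun i j => chordWeight n i j

section Crossing

variable (M : PM n) {a b c d : Fin (2 * n)} (hab : a < b) (hbc : b < c) (hcd : c < d)
  (hfa : M.f a = c) (hfb : M.f b = d)
include hab hbc hcd hfa hfb

@[to_additive]
theorem exists_blockProd_eq_of_crossing {β : Type*} [CommMonoid β]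
    (g : Fin (2 * n) → Fin (2 * n) → β) :
    ∃ R : β, M.blockProd g = g a c * g b d * R ∧
      (M.conj (Equiv.swap b c)).blockProd g = g a b * g c d * R ∧
      (M.conj (Equiv.swap c d)).blockProd g = g a d * g b c * R := by
  have hfc : M.f c = a := by rw [← hfa, M.invol]
  have hfd : M.f d = b := by rw [← hfb, M.invol]
  have hac := (hab.trans hbc).ne
  have had := (hab.trans (hbc.trans hcd)).ne
  have hbd := (hbc.trans hcd).ne
  set S : Finset (Fin (2 * n)) := {a, b, c, d}
  have agree {x y : Fin (2 * n)} (hS : ({x, y, M.f x, M.f y} : Finset _) = S) (i) (hi : i ∈ Sᶜ) :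
      (M.conj (Equiv.swap x y)).f i = M.f i := by
    simp only [← hS, Finset.mem_compl, Finset.mem_insert, Finset.mem_singleton, not_or] at hi
    exact M.conj_swap_apply_of_ne hi.1 hi.2.1 hi.2.2.1 hi.2.2.2
  have agree₁ := agree (x := b) (y := c) (by rw [hfb, hfc]; ext; simp only [S, Finset.mem_insert, Finset.mem_singleton]; tauto)
  have agree₂ := agree (x := c) (y := d) (by rw [hfc, hfd]; ext; simp only [S, Finset.mem_insert, Finset.mem_singleton]; tauto)
  refine ⟨∏ i ∈ Sᶜ, if i < M.f i then g i (M.f i) else 1, ?_, ?_, ?_⟩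
  · rw [blockProd_eq_mul_prod_compl M g (hab.trans hbc) (hbc.trans hcd) hab.ne hfa hfb,
      Finset.insert_comm c b]
  · rw [blockProd_eq_mul_prod_compl _ g hab hcd hac
      (by simp [conj, Equiv.swap_apply_of_ne_of_ne, hab.ne, hac, hfa])
      (by simp [conj, Equiv.swap_apply_of_ne_of_ne, hbd.symm, hcd.ne', hfb])]
    exact congrArg _ (Finset.prod_congr rfl fun i hi => by rw [agree₁ i hi])
  · rw [blockProd_eq_mul_prod_compl _ g (hab.trans (hbc.trans hcd)) hbc hab.ne
      (by simp [conj, Equiv.swap_apply_of_ne_of_ne, hac, had, hfa])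
      (by simp [conj, Equiv.swap_apply_of_ne_of_ne, hbc.ne, hbd, hfb]),
      Finset.insert_comm d b, Finset.pair_comm d c]
    exact congrArg _ (Finset.prod_congr rfl fun i hi => by rw [agree₂ i hi])

theorem deltaM_eq_add_of_crossing :
    DeltaM M = DeltaM (M.conj (Equiv.swap b c)) + DeltaM (M.conj (Equiv.swap c d)) := by
  obtain ⟨R, h, h₁, h₂⟩ := M.exists_blockProd_eq_of_crossing hab hbc hcd hfa hfb Delta
  rw [deltaM_eq_blockProd, deltaM_eq_blockProd, deltaM_eq_blockProd, h, h₁, h₂]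
  linear_combination R * Delta_mul_Delta a b c d

theorem potential_conj_swap_lt_of_crossing :
    (M.conj (Equiv.swap b c)).potential < M.potential ∧
      (M.conj (Equiv.swap c d)).potential < M.potential := by
  obtain ⟨R, h, h₁, h₂⟩ :=
    M.exists_blockSum_eq_of_crossing hab hbc hcd hfa hfb fun i j => chordWeight n i j
  have := chordWeight_add_lt_of_crossing hab hbc hcd d.isLt
  simp only [potential, h, h₁, h₂]
  omega

end Crossing

end PM

theorem deltaM_mem_closure_noncrossing {n : ℕ} (M : PM n) :
    DeltaM M ∈ AddSubmonoid.closure {p : PolyR n | ∃ N : PM n, Noncrossing N ∧ DeltaM N = p} := by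
  by_cases hM : Noncrossing M
  · exact AddSubmonoid.subset_closure ⟨M, hM, rfl⟩
  obtain ⟨a, b, c, d, hab, hbc, hcd, hfa, hfb⟩ := not_not.mp hM
  obtain ⟨h₁, h₂⟩ := M.potential_conj_swap_lt_of_crossing hab hbc hcd hfa hfb
  rw [M.deltaM_eq_add_of_crossing hab hbc hcd hfa hfb]
  exact add_mem (deltaM_mem_closure_noncrossing _) (deltaM_mem_closure_noncrossing _)
termination_by M.potential

theorem deltaM_nonneg_int_comb_of_noncrossing (n : ℕ) (M : PM n) :
    DeltaM M ∈ Submodule.span ℂ {p : PolyR n | ∃ N : PM n, Noncrossing N ∧ DeltaM N = p} ∧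
    DeltaM M ∈ AddSubmonoid.closure {p : PolyR n | ∃ N : PM n, Noncrossing N ∧ DeltaM N = p} :=
  ⟨Submodule.closure_subset_span (deltaM_mem_closure_noncrossing M),
    deltaM_mem_closure_noncrossing M⟩
end
end

section
/- The number of standard Young tableaux of shape (n,n) equals the n-th Catalan number Cat(n) = (1/(n+1))·C(2n,n). -/
open MvPolynomial Finset

noncomputable section

/-!
Record a standard tableau of shape (n,n) by the set `S` of entries of its first row: its rows are
then the increasing enumerations of `S` and `Sᶜ`. The column condition `T (0, j) < T (1, j)` says
that the `j`-th element of `Sᶜ` is preceded by more than `j` elements of `S`, which for all `j`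
together is the ballot condition that every prefix of `{0, …, 2n - 1}` meets `S` at least as often
as `Sᶜ`. Reading `S` as up steps and `Sᶜ` as down steps, ballot sets of size `n` are exactly the
Dyck words of semilength `n`, which are counted by `catalan n`.
-/

open DyckStep

theorem forall_le_iff_card_filter_lt {α : Type*} [LinearOrder α] {n : ℕ} {a b : Fin n → α}
    (ha : Monotone a) (hb : Monotone b) :
    (∀ j, a j ≤ b j) ↔ ∀ x, #{j | b j < x} ≤ #{j | a j < x} := by
  refine ⟨fun h x => card_le_card fun j => by simpa using (h j).trans_lt, fun h j => ?_⟩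
  by_contra! hba
  have := calc (j : ℕ) + 1
      = #(Iic j) := (Fin.card_Iic j).symm
    _ ≤ #{k | b k < a j} := card_le_card fun k hk => by
        simpa using (hb (mem_Iic.1 hk)).trans_lt hba
    _ ≤ #{k | a k < a j} := h (a j)
    _ ≤ #(Iio j) := card_le_card fun k hk => by
        simpa using lt_of_not_ge fun hjk => (ha hjk).not_gt (by simpa using hk)
    _ = j := Fin.card_Iio j
  omega

theorem Finset.card_filter_orderEmbOfFin {α : Type*} [LinearOrder α] (s : Finset α) {k : ℕ}
    (h : #s = k) (p : α → Prop) [DecidablePred p] :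
    #{j | p (s.orderEmbOfFin h j)} = #{x ∈ s | p x} := by
  conv_rhs => rw [← s.image_orderEmbOfFin_univ h]
  rw [filter_image, card_image_of_injective _ (s.orderEmbOfFin h).injective]

theorem List.count_take_ofFn {α : Type*} [DecidableEq α] {m : ℕ} (f : Fin m → α) (a : α)
    (i : ℕ) : ((List.ofFn f).take i).count a = #{k : Fin m | (k : ℕ) < i ∧ f k = a} := by
  have count_eq_sum (l : List α) : l.count a = (l.map fun x => if x = a then 1 else 0).sum := by
    induction l with
    | nil => rfl
    | cons x l ih => by_cases hx : x = a <;> simp [ih, hx, add_comm]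
  rw [count_eq_sum, List.map_take, List.map_ofFn, List.sum_take_ofFn]
  simp only [Function.comp_def, sum_boole, Nat.cast_id]
  congr 1
  ext k
  simp

variable {n m : ℕ}

namespace Finset

def IsBallot (S : Finset (Fin m)) : Prop :=
  ∀ i : ℕ, #{k ∈ Sᶜ | k.val < i} ≤ #{k ∈ S | k.val < i}

def stepWord (S : Finset (Fin m)) : List DyckStep :=
  List.ofFn fun k => if k ∈ S then U else D

theorem count_U_take_stepWord (S : Finset (Fin m)) (i : ℕ) :
    (S.stepWord.take i).count U = #{k ∈ S | k.val < i} := by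
  rw [stepWord, List.count_take_ofFn]
  congr 1
  ext k
  by_cases hk : k ∈ S <;> simp [hk, and_comm]

theorem count_D_take_stepWord (S : Finset (Fin m)) (i : ℕ) :
    (S.stepWord.take i).count D = #{k ∈ Sᶜ | k.val < i} := by
  rw [stepWord, List.count_take_ofFn]
  congr 1
  ext k
  by_cases hk : k ∈ S <;> simp [hk, and_comm]

theorem count_U_stepWord (S : Finset (Fin m)) : S.stepWord.count U = #S := by
  simpa [List.take_of_length_le, stepWord] using S.count_U_take_stepWord m

theorem count_D_stepWord (S : Finset (Fin m)) : S.stepWord.count D = #Sᶜ := by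
  simpa [List.take_of_length_le, stepWord] using S.count_D_take_stepWord m

def toDyckWord (S : Finset (Fin m)) (hcard : #S = #Sᶜ) (hS : S.IsBallot) : DyckWord where
  toList := S.stepWord
  count_U_eq_count_D := by rw [count_U_stepWord, count_D_stepWord, hcard]
  count_D_le_count_U i := by rw [count_U_take_stepWord, count_D_take_stepWord]; exact hS i

theorem card_compl_of_card_eq_half {S : Finset (Fin (2 * n))} (hS : #S = n) : #Sᶜ = n := by
  rw [card_compl, Fintype.card_fin, hS]
  omega

theorem forall_orderEmbOfFin_lt_compl_iff {k : ℕ} (S : Finset (Fin m)) (hS : #S = k)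
    (hSc : #Sᶜ = k) : (∀ j, S.orderEmbOfFin hS j < Sᶜ.orderEmbOfFin hSc j) ↔ S.IsBallot := by
  have hne (j : Fin k) : S.orderEmbOfFin hS j ≠ Sᶜ.orderEmbOfFin hSc j := fun h =>
    mem_compl.1 (Sᶜ.orderEmbOfFin_mem hSc j) (h ▸ S.orderEmbOfFin_mem hS j)
  have hmono (t : Finset (Fin m)) (ht : #t = k) :
      Monotone fun j => (t.orderEmbOfFin ht j : ℕ) :=
    (Fin.val_strictMono.comp (t.orderEmbOfFin ht).strictMono).monotone
  calc (∀ j, S.orderEmbOfFin hS j < Sᶜ.orderEmbOfFin hSc j)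
      ↔ ∀ j, (S.orderEmbOfFin hS j : ℕ) ≤ Sᶜ.orderEmbOfFin hSc j :=
        forall_congr' fun j => by
          rw [lt_iff_le_and_ne, and_iff_left (hne j), Fin.le_iff_val_le_val]
    _ ↔ ∀ i : ℕ,
          #{j | (Sᶜ.orderEmbOfFin hSc j : ℕ) < i} ≤ #{j | (S.orderEmbOfFin hS j : ℕ) < i} :=
        forall_le_iff_card_filter_lt (hmono S hS) (hmono Sᶜ hSc)
    _ ↔ S.IsBallot := forall_congr' fun i => by
        rw [card_filter_orderEmbOfFin S hS (fun k => k.val < i),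
          card_filter_orderEmbOfFin Sᶜ hSc (fun k => k.val < i)]

end Finset

def DyckWord.upSet (p : DyckWord) (m : ℕ) : Finset (Fin m) :=
  {k | p.toList[(k : ℕ)]? = some U}

theorem DyckWord.stepWord_upSet (p : DyckWord) (h : p.toList.length = m) :
    (p.upSet m).stepWord = p.toList := by
  refine List.ext_getElem (by simp [stepWord, h]) fun k _ hk => ?_
  rcases (p.toList[k]).dichotomy with h | h <;>
    simp [stepWord, upSet, h, List.getElem?_eq_getElem hk]

def ballotEquivDyckWord (n : ℕ) :
    {S : Finset (Fin (2 * n)) // #S = n ∧ S.IsBallot} ≃ {p : DyckWord // p.semilength = n} where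
  toFun S := ⟨S.1.toDyckWord (by rw [S.2.1, card_compl_of_card_eq_half S.2.1]) S.2.2,
    S.1.count_U_stepWord.trans S.2.1⟩
  invFun p :=
    have hstep := p.1.stepWord_upSet (by rw [← p.1.two_mul_semilength_eq_length, p.2])
    ⟨p.1.upSet (2 * n), by rw [← count_U_stepWord, hstep]; exact p.2, fun i => by
      rw [← count_D_take_stepWord, ← count_U_take_stepWord, hstep]
      exact p.1.count_D_le_count_U i⟩
  left_inv S := Subtype.ext <| by ext k; simp [DyckWord.upSet, toDyckWord, stepWord]
  right_inv p := Subtype.ext <| DyckWord.ext <|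
    p.1.stepWord_upSet (by rw [← p.1.two_mul_semilength_eq_length, p.2])

namespace TwoRowTableau

def IsStandard (T : Fin 2 × Fin n → Fin (2 * n)) : Prop :=
  Function.Bijective T ∧ (∀ (i : Fin 2) (j j' : Fin n), j < j' → T (i, j) < T (i, j')) ∧
    ∀ j : Fin n, T (0, j) < T (1, j)

def rowSet (T : Fin 2 × Fin n → Fin (2 * n)) : Finset (Fin (2 * n)) :=
  univ.image fun j => T (0, j)

theorem card_rowSet {T : Fin 2 × Fin n → Fin (2 * n)} (hT : Function.Injective T) :
    #(rowSet T) = n :=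
  (card_image_of_injective univ fun j j' h => by simpa using hT h).trans (card_fin n)

def ofRowSet (S : Finset (Fin (2 * n))) (hS : #S = n) : Fin 2 × Fin n ≃ Fin (2 * n) :=
  ((finTwoEquiv.prodCongr (Equiv.refl _)).trans (Equiv.boolProdEquivSum _)).trans
    (finSumEquivOfFinset hS (card_compl_of_card_eq_half hS))

section ofRowSet

variable {S : Finset (Fin (2 * n))} (hS : #S = n)

@[simp]
theorem ofRowSet_zero (j : Fin n) : ofRowSet S hS (0, j) = S.orderEmbOfFin hS j := rfl

@[simp]
theorem ofRowSet_one (j : Fin n) :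
    ofRowSet S hS (1, j) = Sᶜ.orderEmbOfFin (card_compl_of_card_eq_half hS) j := rfl

theorem strictMono_ofRowSet_row (i : Fin 2) : StrictMono fun j => ofRowSet S hS (i, j) := by
  fin_cases i
  · exact (S.orderEmbOfFin hS).strictMono
  · exact (Sᶜ.orderEmbOfFin (card_compl_of_card_eq_half hS)).strictMono

theorem rowSet_ofRowSet : rowSet (ofRowSet S hS) = S := by
  simp [rowSet, image_orderEmbOfFin_univ]

theorem ofRowSet_col_lt_iff :
    (∀ j, ofRowSet S hS (0, j) < ofRowSet S hS (1, j)) ↔ S.IsBallot :=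
  S.forall_orderEmbOfFin_lt_compl_iff hS (card_compl_of_card_eq_half hS)

end ofRowSet

theorem ofRowSet_rowSet {T : Fin 2 × Fin n → Fin (2 * n)} (hT : Function.Injective T)
    (hrow : ∀ (i : Fin 2) (j j' : Fin n), j < j' → T (i, j) < T (i, j')) :
    ⇑(ofRowSet (rowSet T) (card_rowSet hT)) = T := by
  have hmem₁ (j : Fin n) : T (1, j) ∈ (rowSet T)ᶜ := by
    simp only [rowSet, mem_compl, mem_image, mem_univ, true_and, not_exists]
    exact fun j' h => by simpa using hT h
  funext ⟨i, j⟩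
  fin_cases i
  · exact congrFun (orderEmbOfFin_unique (card_rowSet hT)
      (fun j => mem_image_of_mem _ (mem_univ j)) fun _ _ => hrow 0 _ _).symm j
  · exact congrFun (orderEmbOfFin_unique (card_compl_of_card_eq_half (card_rowSet hT))
      hmem₁ fun _ _ => hrow 1 _ _).symm j

def standardEquivBallot (n : ℕ) :
    {T : Fin 2 × Fin n → Fin (2 * n) // IsStandard T} ≃
      {S : Finset (Fin (2 * n)) // #S = n ∧ S.IsBallot} where
  toFun T := ⟨rowSet T.1, card_rowSet T.2.1.injective, (ofRowSet_col_lt_iff _).1 <| by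
    rw [ofRowSet_rowSet T.2.1.injective T.2.2.1]; exact T.2.2.2⟩
  invFun S := ⟨ofRowSet S.1 S.2.1, (ofRowSet S.1 S.2.1).bijective,
    fun i _ _ h => strictMono_ofRowSet_row S.2.1 i h, (ofRowSet_col_lt_iff S.2.1).2 S.2.2⟩
  left_inv T := Subtype.ext (ofRowSet_rowSet T.2.1.injective T.2.2.1)
  right_inv S := Subtype.ext (rowSet_ofRowSet S.2.1)

end TwoRowTableau

theorem card_standard_young_tableaux_two_rows (n : ℕ) :
    Nat.card {T : Fin 2 × Fin n → Fin (2 * n) //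
      Function.Bijective T ∧
      (∀ (i : Fin 2) (j j' : Fin n), j < j' → T (i, j) < T (i, j')) ∧
      (∀ j : Fin n, T (0, j) < T (1, j))} = catalan n :=
  calc _ = Nat.card {S : Finset (Fin (2 * n)) // #S = n ∧ S.IsBallot} :=
        Nat.card_congr (TwoRowTableau.standardEquivBallot n)
    _ = Nat.card {p : DyckWord // p.semilength = n} := Nat.card_congr (ballotEquivDyckWord n)
    _ = catalan n := by
      rw [Nat.card_eq_fintype_card, DyckWord.card_dyckWord_semilength_eq_catalan]
end
end

section
/- The set {Δ_M : M a noncrossing perfect matching on {1,...,2n}} is linearly independent over ℂ in the polynomial ring ℂ[x]. -/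
open MvPolynomial Finset

noncomputable section

/-!
Evaluate at the 0/1 point of a noncrossing matching `M` whose first row marks the openers
(left ends of blocks) of `M` and whose second row marks its closers. There `Δ_M` equals `1`,
and `Δ_{M'}` is nonzero only if every block of `M'` contains exactly one opener of `M`.
Sending each opener of `M'` to the opener of `M` in its block is then an injection that
never moves an element to the left, so the sum of the openers of `M'` is at most that of `M`,
with equality only when `M` and `M'` have the same openers, and a noncrossing matching is
determined by its openers. The evaluation matrix is therefore triangular for this weight.
-/

theorem linearIndependent_of_eval_triangular {ι R M α : Type*} [Ring R] [NoZeroDivisors R]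
    [AddCommGroup M] [Module R M] [LinearOrder α] (v : ι → M) (φ : ι → M →ₗ[R] R) (w : ι → α)
    (hdiag : ∀ i, φ i (v i) ≠ 0) (htri : ∀ i j, j ≠ i → φ i (v j) ≠ 0 → w j < w i) :
    LinearIndependent R v := by
  classical
  rw [linearIndependent_iff]
  intro l hl
  by_contra hne
  obtain ⟨i, hi, hmin⟩ := l.support.exists_min_image w (Finsupp.support_nonempty_iff.mpr hne)
  have hvanish : ∀ j ∈ l.support, j ≠ i → l j * φ i (v j) = 0 := fun j hj hji => by
    by_contra hj0
    exact (htri i j hji (right_ne_zero_of_mul hj0)).not_ge (hmin j hj)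
  have hsum := congrArg (φ i) hl
  simp only [Finsupp.linearCombination_apply, Finsupp.sum, map_sum, map_smul, smul_eq_mul,
    map_zero] at hsum
  rw [Finset.sum_eq_single_of_mem i hi hvanish] at hsum
  exact mul_ne_zero (Finsupp.mem_support_iff.mp hi) (hdiag i) hsum

namespace PM

variable {n : ℕ}

lemma ext {M M' : PM n} (h : M.f = M'.f) : M = M' := by
  cases M; cases M'; simpa using h

lemma f_injective (M : PM n) : Function.Injective M.f :=
  Function.LeftInverse.injective M.invol

lemma f_lt_iff_not_lt (M : PM n) {i : Fin (2 * n)} : M.f i < i ↔ ¬ i < M.f i :=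
  ⟨fun h => not_lt.mpr h.le, fun h => lt_of_le_of_ne (not_lt.mp h) (M.nofix i)⟩

lemma not_lt_f_f (M : PM n) {i : Fin (2 * n)} (h : i < M.f i) : ¬ M.f i < M.f (M.f i) := by
  rw [M.invol]; exact not_lt.mpr h.le

def openers (M : PM n) : Finset (Fin (2 * n)) := {i | i < M.f i}

@[simp]
lemma mem_openers {M : PM n} {i : Fin (2 * n)} : i ∈ M.openers ↔ i < M.f i := by
  simp [openers]

lemma compl_openers (M : PM n) : M.openersᶜ = M.openers.image M.f := by
  ext i
  simp only [mem_compl, mem_openers, mem_image]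
  constructor
  · intro h
    exact ⟨M.f i, by rw [M.invol]; exact M.f_lt_iff_not_lt.mpr h, M.invol i⟩
  · rintro ⟨a, ha, rfl⟩
    exact M.not_lt_f_f ha

lemma card_openers (M : PM n) : #M.openers = n := by
  have h := card_compl M.openers
  rw [compl_openers, card_image_of_injective _ M.f_injective, Fintype.card_fin] at h
  omega

/-- Otherwise, since `M` is noncrossing, the `M`-partner of `M'.f c` would be a closer left of
`c` at which `M` and `M'` disagree. -/
lemma not_f_lt_f_of_eqOn_closers {M M' : PM n} (hM : Noncrossing M)
    (hT : ∀ i, i < M.f i ↔ i < M'.f i) {c : Fin (2 * n)} (hc : M.f c < c)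
    (hbelow : ∀ d < c, M.f d < d → M.f d = M'.f d) : ¬ M.f c < M'.f c := by
  intro hlt
  have hc' : M'.f c < c := by
    rw [f_lt_iff_not_lt, ← hT]; exact M.f_lt_iff_not_lt.mp hc
  have hopen : M'.f c < M.f (M'.f c) := by
    rw [hT, M'.invol]; exact hc'
  have hpartner_lt : M.f (M'.f c) < c := by
    by_contra! hle
    have hne : c ≠ M.f (M'.f c) := fun h => by
      have h' := congrArg M.f h
      rw [M.invol] at h'
      exact hlt.ne h'
    exact hM ⟨M.f c, M'.f c, c, _, hlt, hc', lt_of_le_of_ne hle hne, M.invol c, rfl⟩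
  have hagree := hbelow _ hpartner_lt (by rwa [M.invol])
  rw [M.invol] at hagree
  exact hpartner_lt.ne (M'.f_injective hagree).symm

lemma eq_of_noncrossing_of_openers_eq {M M' : PM n} (hM : Noncrossing M)
    (hM' : Noncrossing M') (hT : M.openers = M'.openers) : M = M' := by
  have hT' : ∀ i, i < M.f i ↔ i < M'.f i := by simpa [Finset.ext_iff] using hT
  have hclosers : ∀ c, M.f c < c → M.f c = M'.f c := by
    intro c
    induction c using WellFoundedLT.induction with
    | _ c ih =>
      intro hc
      have hc' : M'.f c < c := by
        rw [f_lt_iff_not_lt, ← hT']; exact M.f_lt_iff_not_lt.mp hc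
      have hbelow' : ∀ d < c, M'.f d < d → M'.f d = M.f d := fun d hd h =>
        (ih d hd (by rw [f_lt_iff_not_lt, hT']; exact M'.f_lt_iff_not_lt.mp h)).symm
      exact le_antisymm
        (not_lt.mp (not_f_lt_f_of_eqOn_closers hM' (fun i => (hT' i).symm) hc' hbelow'))
        (not_lt.mp (not_f_lt_f_of_eqOn_closers hM hT' hc ih))
  refine ext (funext fun i => ?_)
  by_cases hi : i < M.f i
  · have h := hclosers (M.f i) (by rwa [M.invol])
    rw [M.invol] at h
    conv_rhs => rw [h, M'.invol]
  · exact hclosers i (M.f_lt_iff_not_lt.mpr hi)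

def openerSum (M : PM n) : ℕ := ∑ i ∈ M.openers, (i : ℕ)

/-- Row `0` is the indicator of the openers of `M`, row `1` that of its closers. -/
def evalPoint (M : PM n) : Fin 2 × Fin (2 * n) → ℂ :=
  fun p => if (p.1 = 0 ↔ p.2 < M.f p.2) then 1 else 0

lemma aeval_evalPoint_delta_of_lt {M : PM n} {a b : Fin (2 * n)} (ha : a < M.f a)
    (hb : ¬ b < M.f b) : aeval M.evalPoint (Delta a b) = 1 := by
  simp [Delta, evalPoint, ha, hb]

lemma aeval_evalPoint_delta_eq_zero {M : PM n} {a b : Fin (2 * n)}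
    (h : a < M.f a ↔ b < M.f b) : aeval M.evalPoint (Delta a b) = 0 := by
  by_cases ha : a < M.f a
  · simp [Delta, evalPoint, ha, h.mp ha]
  · simp [Delta, evalPoint, ha, mt h.mpr ha]

lemma aeval_evalPoint_deltaM_self (M : PM n) : aeval M.evalPoint (DeltaM M) = 1 := by
  rw [DeltaM, map_prod]
  refine prod_eq_one fun i hi => aeval_evalPoint_delta_of_lt (mem_filter.mp hi).2 ?_
  exact M.not_lt_f_f (mem_filter.mp hi).2

lemma not_lt_iff_of_aeval_deltaM_ne_zero {M M' : PM n} (h : aeval M.evalPoint (DeltaM M') ≠ 0)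
    {i : Fin (2 * n)} (hi : i < M'.f i) : ¬ (i < M.f i ↔ M'.f i < M.f (M'.f i)) := by
  rw [DeltaM, map_prod, prod_ne_zero_iff] at h
  exact fun hiff => h i (mem_filter.mpr ⟨mem_univ i, hi⟩) (aeval_evalPoint_delta_eq_zero hiff)

lemma openerSum_lt_of_aeval_deltaM_ne_zero {M M' : PM n} (hM : Noncrossing M)
    (hM' : Noncrossing M') (hne : M' ≠ M) (h : aeval M.evalPoint (DeltaM M') ≠ 0) :
    M'.openerSum < M.openerSum := by
  obtain ⟨i₀, hi₀, hi₀M⟩ : ∃ i ∈ M'.openers, ¬ i < M.f i := by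
    by_contra! hall
    refine hne (eq_of_noncrossing_of_openers_eq hM' hM (eq_of_subset_of_card_le ?_ ?_))
    · exact fun i hi => mem_openers.mpr (hall i hi)
    · rw [card_openers, card_openers]
  -- `g` sends an opener of `M'` to the unique opener of `M` in its block.
  let g i := if i < M.f i then i else M'.f i
  have hg_mem : ∀ i ∈ M'.openers, g i ∈ M.openers := fun i hi => by
    have hone := not_lt_iff_of_aeval_deltaM_ne_zero h (mem_openers.mp hi)
    by_cases hiM : i < M.f i
    · simp [g, hiM]
    · simpa [g, hiM] using (not_iff.mp hone).mp hiM
  have hg_lt : ∀ i ∈ M'.openers, ¬ i < M.f i → i < g i := fun i hi hiM => by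
    simpa [g, hiM] using hi
  have hg_le : ∀ i ∈ M'.openers, i ≤ g i := fun i hi => by
    by_cases hiM : i < M.f i
    · simp [g, hiM]
    · exact (hg_lt i hi hiM).le
  have hg_inj : Set.InjOn g M'.openers := by
    intro i₁ h₁ i₂ h₂ heq
    have h₁ := mem_openers.mp h₁
    have h₂ := mem_openers.mp h₂
    by_cases hi₁ : i₁ < M.f i₁ <;> by_cases hi₂ : i₂ < M.f i₂ <;> simp only [g, hi₁, hi₂,
      if_true, if_false] at heq
    · exact heq
    · exact absurd (heq ▸ h₁) (M'.not_lt_f_f h₂)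
    · exact absurd (heq.symm ▸ h₂) (M'.not_lt_f_f h₁)
    · exact M'.f_injective heq
  calc M'.openerSum < ∑ i ∈ M'.openers, (g i : ℕ) :=
        sum_lt_sum (fun i hi => hg_le i hi) ⟨i₀, hi₀, hg_lt i₀ hi₀ hi₀M⟩
    _ = ∑ j ∈ M'.openers.image g, (j : ℕ) := (sum_image hg_inj).symm
    _ ≤ M.openerSum := sum_le_sum_of_subset (image_subset_iff.mpr hg_mem)

end PM

theorem deltaM_noncrossing_linearIndependent (n : ℕ) :
    LinearIndependent ℂ (fun M : {M : PM n // Noncrossing M} => DeltaM M.1) := by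
  refine linearIndependent_of_eval_triangular _ (fun M => (aeval M.1.evalPoint).toLinearMap)
    (fun M => M.1.openerSum) (fun M => ?_) (fun M M' hne h => ?_)
  · simp [PM.aeval_evalPoint_deltaM_self]
  · exact PM.openerSum_lt_of_aeval_deltaM_ne_zero M.2 M'.2 (Subtype.coe_ne_coe.mpr hne) h
end
end

section
/- Replacing a crossing pair {a,c},{b,d} (a<b<c<d) of a perfect matching M by {a,b},{c,d} strictly decreases the number of crossing pairs of the matching; the same holds for the replacement by {a,d},{b,c}. -/
open MvPolynomial Finset

noncomputable section

/-!
Count crossing pairs chord by chord. Uncrossing only changes the two chords on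
`S = {a, b, c, d}`: pairs of chords off `S` are unaffected, and the pair on `S` stops crossing.
A chord `{x, y}` off `S`, with `x < y`, crosses a chord on `S` iff exactly one endpoint of the
latter lies in `(x, y)`; as `S ∩ (x, y)` is a block of consecutive points of `a < b < c < d`,
the new chords on `S` cross `{x, y}` at most as often as `{a, c}` and `{b, d}` do.
-/

theorem Finset.sum_insert_four {α β : Type*} [LinearOrder α] [AddCommMonoid β] (g : α → β)
    {a b c d : α} (hab : a < b) (hbc : b < c) (hcd : c < d) :
    ∑ s ∈ {a, b, c, d}, g s = g a + (g b + (g c + g d)) := by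
  rw [Finset.sum_insert (by simp [hab.ne, (hab.trans hbc).ne, (hab.trans (hbc.trans hcd)).ne]),
    Finset.sum_insert (by simp [hbc.ne, (hbc.trans hcd).ne]), Finset.sum_pair hcd.ne]

namespace PM

variable {n : ℕ}

theorem f_eq_comm (M : PM n) {i j : Fin (2 * n)} : M.f i = j ↔ M.f j = i :=
  ⟨fun h => h ▸ M.invol i, fun h => h ▸ M.invol j⟩

def Crosses (M : PM n) (p q : Fin (2 * n)) : Prop :=
  p < q ∧ q < M.f p ∧ M.f p < M.f q

instance (M : PM n) : DecidableRel M.Crosses := fun _ _ => by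
  unfold Crosses; infer_instance

def crossCount (M : PM n) (p q : Fin (2 * n)) : ℕ :=
  (if M.Crosses p q then 1 else 0) + if M.Crosses q p then 1 else 0

theorem crossings_eq_sum (M : PM n) :
    crossings M = ∑ p, ∑ q, if M.Crosses p q then 1 else 0 := by
  rw [crossings, Finset.card_filter, ← Finset.univ_product_univ, Finset.sum_product]
  rfl

theorem crossings_eq_sum_split (M : PM n) (S : Finset (Fin (2 * n))) :
    crossings M = ∑ p ∈ S, ∑ q ∈ S, (if M.Crosses p q then 1 else 0) +
      ∑ x ∈ Sᶜ, ∑ s ∈ S, M.crossCount s x +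
      ∑ p ∈ Sᶜ, ∑ q ∈ Sᶜ, (if M.Crosses p q then 1 else 0) := by
  simp only [crossings_eq_sum, crossCount, ← Finset.sum_add_sum_compl S, Finset.sum_add_distrib]
  rw [Finset.sum_comm (s := S) (t := Sᶜ)]
  ring

theorem crosses_iff_of_eq {M N : PM n} {p q : Fin (2 * n)} (hp : N.f p = M.f p)
    (hq : N.f q = M.f q) : N.Crosses p q ↔ M.Crosses p q := by
  simp only [Crosses, hp, hq]

theorem crossings_lt_of_eqOn_compl {M N : PM n} (S : Finset (Fin (2 * n)))
    (hNM : ∀ k ∉ S, N.f k = M.f k)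
    (hN : ∀ p ∈ S, ∀ q ∈ S, ¬ N.Crosses p q) (hM : ∃ p ∈ S, ∃ q ∈ S, M.Crosses p q)
    (hout : ∀ x ∉ S, ∑ s ∈ S, N.crossCount s x ≤ ∑ s ∈ S, M.crossCount s x) :
    crossings N < crossings M := by
  obtain ⟨p₀, hp₀, q₀, hq₀, hcross⟩ := hM
  have hin_N : ∑ p ∈ S, ∑ q ∈ S, (if N.Crosses p q then 1 else 0) = 0 :=
    Finset.sum_eq_zero fun p hp => Finset.sum_eq_zero fun q hq => if_neg (hN p hp q hq)
  have hin_M : 1 ≤ ∑ p ∈ S, ∑ q ∈ S, (if M.Crosses p q then 1 else 0) :=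
    calc 1 = if M.Crosses p₀ q₀ then 1 else 0 := (if_pos hcross).symm
      _ ≤ ∑ q ∈ S, (if M.Crosses p₀ q then 1 else 0) :=
        Finset.single_le_sum (f := fun q => if M.Crosses p₀ q then 1 else 0)
          (fun _ _ => Nat.zero_le _) hq₀
      _ ≤ _ := Finset.single_le_sum (f := fun p => ∑ q ∈ S, if M.Crosses p q then 1 else 0)
          (fun _ _ => Nat.zero_le _) hp₀
  have hmixed := Finset.sum_le_sum fun x hx => hout x (Finset.mem_compl.mp hx)
  have hoff : ∑ p ∈ Sᶜ, ∑ q ∈ Sᶜ, (if N.Crosses p q then 1 else 0) =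
      ∑ p ∈ Sᶜ, ∑ q ∈ Sᶜ, (if M.Crosses p q then 1 else 0) :=
    Finset.sum_congr rfl fun p hp => Finset.sum_congr rfl fun q hq =>
      if_congr (crosses_iff_of_eq (hNM p (Finset.mem_compl.mp hp))
        (hNM q (Finset.mem_compl.mp hq))) rfl rfl
  rw [crossings_eq_sum_split N S, crossings_eq_sum_split M S]
  omega

theorem crossCount_eq (M : PM n) {s x : Fin (2 * n)} (hsx : s ≠ x) (hsy : s ≠ M.f x) :
    M.crossCount s x = if s < M.f s ∧ x < M.f x ∧
      ¬ (x < s ∧ s < M.f x ↔ x < M.f s ∧ M.f s < M.f x) then 1 else 0 := by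
  have htx : M.f s ≠ x := fun h => hsy (M.f_eq_comm.mp h).symm
  have hty : M.f s ≠ M.f x := fun h => hsx (by rw [← M.invol s, h, M.invol])
  unfold crossCount
  split_ifs <;> unfold Crosses at * <;> omega

theorem sum_crossCount_eq (M : PM n) {x : Fin (2 * n)} {S : Finset (Fin (2 * n))}
    (hx : x ∉ S) (hy : M.f x ∉ S) :
    ∑ s ∈ S, M.crossCount s x = ∑ s ∈ S, if s < M.f s ∧ x < M.f x ∧
      ¬ (x < s ∧ s < M.f x ↔ x < M.f s ∧ M.f s < M.f x) then 1 else 0 :=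
  Finset.sum_congr rfl fun _ hs =>
    crossCount_eq M (ne_of_mem_of_not_mem hs hx) (ne_of_mem_of_not_mem hs hy)

theorem f_notMem_of_mapsTo (M : PM n) {S : Finset (Fin (2 * n))} (hS : ∀ s ∈ S, M.f s ∈ S)
    {x : Fin (2 * n)} (hx : x ∉ S) : M.f x ∉ S :=
  fun h => hx (M.invol x ▸ hS _ h)

section Uncross

variable {M N : PM n} {a b c d : Fin (2 * n)}

theorem crossings_lt_of_eqOn_compl_four (hab : a < b) (hbc : b < c) (hcd : c < d)
    (hac : M.f a = c) (hbd : M.f b = d)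
    (hNM : ∀ k, k ≠ a → k ≠ b → k ≠ c → k ≠ d → N.f k = M.f k)
    (hN : ∀ p ∈ ({a, b, c, d} : Finset _), ∀ q ∈ ({a, b, c, d} : Finset _), ¬ N.Crosses p q)
    (hout : ∀ x ∉ ({a, b, c, d} : Finset _), M.f x ∉ ({a, b, c, d} : Finset _) →
      N.f x = M.f x →
        ∑ s ∈ {a, b, c, d}, N.crossCount s x ≤ ∑ s ∈ {a, b, c, d}, M.crossCount s x) :
    crossings N < crossings M := by
  have hNM' : ∀ k ∉ ({a, b, c, d} : Finset _), N.f k = M.f k := fun k hk => by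
    simp only [Finset.mem_insert, Finset.mem_singleton, not_or] at hk
    exact hNM k hk.1 hk.2.1 hk.2.2.1 hk.2.2.2
  have hca : M.f c = a := M.f_eq_comm.mp hac
  have hdb : M.f d = b := M.f_eq_comm.mp hbd
  have hS : ∀ s ∈ ({a, b, c, d} : Finset _), M.f s ∈ ({a, b, c, d} : Finset _) := by
    simp only [Finset.mem_insert, Finset.mem_singleton]
    rintro s (rfl | rfl | rfl | rfl) <;> simp [hac, hbd, hca, hdb]
  refine crossings_lt_of_eqOn_compl _ hNM' hN
    ⟨a, by simp, b, by simp, hab, by rwa [hac], by rwa [hac, hbd]⟩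
    fun x hx => hout x hx (M.f_notMem_of_mapsTo hS hx) (hNM' x hx)

theorem crossings_lt_of_pair_ab_cd (hab : a < b) (hbc : b < c) (hcd : c < d)
    (hac : M.f a = c) (hbd : M.f b = d) (ha : N.f a = b) (hc : N.f c = d)
    (hNM : ∀ k, k ≠ a → k ≠ b → k ≠ c → k ≠ d → N.f k = M.f k) :
    crossings N < crossings M := by
  have hb : N.f b = a := N.f_eq_comm.mp ha
  have hd : N.f d = c := N.f_eq_comm.mp hc
  have hca : M.f c = a := M.f_eq_comm.mp hac
  have hdb : M.f d = b := M.f_eq_comm.mp hbd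
  refine crossings_lt_of_eqOn_compl_four hab hbc hcd hac hbd hNM ?_ fun x hx hy hNx => ?_
  · simp only [Finset.mem_insert, Finset.mem_singleton]
    rintro p (rfl | rfl | rfl | rfl) q (rfl | rfl | rfl | rfl) <;>
      simp only [Crosses, ha, hb, hc, hd] <;> omega
  · rw [sum_crossCount_eq M hx hy, sum_crossCount_eq N hx (hNx ▸ hy), hNx,
      Finset.sum_insert_four _ hab hbc hcd, Finset.sum_insert_four _ hab hbc hcd]
    simp only [ha, hb, hc, hd, hac, hbd, hca, hdb, hab, hcd, hab.trans hbc, hbc.trans hcd,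
      not_lt_of_gt (hab.trans hbc), not_lt_of_gt (hbc.trans hcd), true_and, false_and,
      if_false, add_zero]
    split_ifs <;> omega

theorem crossings_lt_of_pair_ad_bc (hab : a < b) (hbc : b < c) (hcd : c < d)
    (hac : M.f a = c) (hbd : M.f b = d) (ha : N.f a = d) (hb : N.f b = c)
    (hNM : ∀ k, k ≠ a → k ≠ b → k ≠ c → k ≠ d → N.f k = M.f k) :
    crossings N < crossings M := by
  have hd : N.f d = a := N.f_eq_comm.mp ha
  have hc : N.f c = b := N.f_eq_comm.mp hb
  have hca : M.f c = a := M.f_eq_comm.mp hac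
  have hdb : M.f d = b := M.f_eq_comm.mp hbd
  refine crossings_lt_of_eqOn_compl_four hab hbc hcd hac hbd hNM ?_ fun x hx hy hNx => ?_
  · simp only [Finset.mem_insert, Finset.mem_singleton]
    rintro p (rfl | rfl | rfl | rfl) q (rfl | rfl | rfl | rfl) <;>
      simp only [Crosses, ha, hb, hc, hd] <;> omega
  · rw [sum_crossCount_eq M hx hy, sum_crossCount_eq N hx (hNx ▸ hy), hNx,
      Finset.sum_insert_four _ hab hbc hcd, Finset.sum_insert_four _ hab hbc hcd]
    simp only [ha, hb, hc, hd, hac, hbd, hca, hdb, hab.trans hbc, hbc.trans hcd,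
      hab.trans (hbc.trans hcd), not_lt_of_gt hbc, not_lt_of_gt (hab.trans hbc),
      not_lt_of_gt (hbc.trans hcd), not_lt_of_gt (hab.trans (hbc.trans hcd)),
      true_and, false_and, if_false, add_zero]
    split_ifs <;> omega

end Uncross

end PM

theorem uncross_decreases_crossings (n : ℕ) (M : PM n) (a b c d : Fin (2 * n))
    (hab : a < b) (hbc : b < c) (hcd : c < d)
    (hac : M.f a = c) (hbd : M.f b = d) :
    (∀ M' : PM n, M'.f a = b → M'.f c = d →
      (∀ k, k ≠ a → k ≠ b → k ≠ c → k ≠ d → M'.f k = M.f k) →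
      crossings M' < crossings M) ∧
    (∀ M'' : PM n, M''.f a = d → M''.f b = c →
      (∀ k, k ≠ a → k ≠ b → k ≠ c → k ≠ d → M''.f k = M.f k) →
      crossings M'' < crossings M) :=
  ⟨fun _ ha hc hM => PM.crossings_lt_of_pair_ab_cd hab hbc hcd hac hbd ha hc hM,
    fun _ ha hb hM => PM.crossings_lt_of_pair_ad_bc hab hbc hcd hac hbd ha hb hM⟩
end
end
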